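/- (Theorem 2, part (i): characterization of M^{∘,0}.) Let S be a martingale with S_0 = 0 and let τ* be the first optimal stopping time. Then M := M* − S belongs to M^{∘,0} if and only if, almost surely: (dd1) max_{0 ≤ r < j} ( Z_r − Y*_r − S_j + S_r ) ≤ 0 on the event { j ≤ τ* } for every 0 ≤ j ≤ J, and (dd2) S_j − S_{τ*} ≤ Y*_j − Z_j + A*_j on the event { τ* < j } for every 0 ≤ j ≤ J (where A*_j = 0 for all 0 ≤ j ≤ τ*). -/

import Mathlib

/-!
Since `M⋆ − A⋆ = Y − Y 0`, the pathwise maximum of `Z − M` is `Y 0 + G` with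
`G = max_r (Z r − Y r − A⋆ r + S r)`, and `G ≥ S τ⋆` because `Y = Z` and `A⋆ = 0` at `τ⋆`.
By optional sampling `E[S τ⋆ | ℱ 0] = S 0 = 0`, so `M` is weakly optimal iff the nonnegative
`G − S τ⋆` has zero conditional expectation, i.e. iff `G = S τ⋆` almost surely. Comparing the
terms of the maximum with `S τ⋆` gives (dd2) for `r > τ⋆` and (dd1) at `j = τ⋆`; (dd1) at an
earlier `j ≤ τ⋆` follows by conditioning on `ℱ j`, since `E[S (τ⋆ ∨ j) | ℱ j] = S j`.
-/

open MeasureTheory Finset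

section

variable {Ω : Type*} {mΩ : MeasurableSpace Ω} {μ : Measure Ω}

section ConditionalExpectation

variable {m : MeasurableSpace Ω}

theorem ae_eq_zero_of_nonneg_of_condExp_ae_eq_zero (hm : m ≤ mΩ) [SigmaFinite (μ.trim hm)]
    {f : Ω → ℝ} (hf_nonneg : 0 ≤ᵐ[μ] f) (hf : Integrable f μ) (h : μ[f | m] =ᵐ[μ] 0) :
    f =ᵐ[μ] 0 := by
  rw [← integral_eq_zero_iff_of_nonneg_ae hf_nonneg hf, ← integral_condExp hm,
    integral_congr_ae h]
  simp

theorem condExp_ae_eq_zero_iff_ae_eq (hm : m ≤ mΩ) [SigmaFinite (μ.trim hm)] {f g : Ω → ℝ}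
    (hf : Integrable f μ) (hg : Integrable g μ) (hgf : g ≤ᵐ[μ] f) (hg_zero : μ[g | m] =ᵐ[μ] 0) :
    μ[f | m] =ᵐ[μ] 0 ↔ f =ᵐ[μ] g := by
  refine ⟨fun hf_zero => ?_, fun hfg => (condExp_congr_ae hfg).trans hg_zero⟩
  have hsub : μ[f - g | m] =ᵐ[μ] 0 := by
    filter_upwards [condExp_sub hf hg m, hf_zero, hg_zero] with ω h h₁ h₂
    simp [h, h₁, h₂]
  filter_upwards [ae_eq_zero_of_nonneg_of_condExp_ae_eq_zero hm
    (hgf.mono fun ω h => sub_nonneg.mpr h) (hf.sub hg) hsub] with ω h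
  exact sub_eq_zero.mp h

theorem ae_eq_condExp_add_iff (hm : m ≤ mΩ) [SigmaFinite (μ.trim hm)] {f g : Ω → ℝ}
    (hf_meas : StronglyMeasurable[m] f) (hf : Integrable f μ) (hg : Integrable g μ) :
    f =ᵐ[μ] μ[f + g | m] ↔ μ[g | m] =ᵐ[μ] 0 := by
  have hadd : μ[f + g | m] =ᵐ[μ] f + μ[g | m] := by
    simpa only [condExp_of_stronglyMeasurable hm hf_meas hf] using condExp_add hf hg m
  constructor
  · intro h
    filter_upwards [h.trans hadd] with ω hω
    simpa using hω
  · intro h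
    filter_upwards [hadd, h] with ω h₁ h₂
    simp [h₁, h₂]

theorem ae_le_condExp_of_ae_le_on (hm : m ≤ mΩ) [SigmaFinite (μ.trim hm)] {s : Set Ω}
    (hs : MeasurableSet[m] s) {f g : Ω → ℝ} (hf_meas : StronglyMeasurable[m] f)
    (hf : Integrable f μ) (hg : Integrable g μ) (hfg : ∀ᵐ ω ∂μ, ω ∈ s → f ω ≤ g ω) :
    ∀ᵐ ω ∂μ, ω ∈ s → f ω ≤ μ[g | m] ω := by
  have hle : μ[s.indicator f | m] ≤ᵐ[μ] μ[s.indicator g | m] := by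
    refine condExp_mono (hf.indicator (hm s hs)) (hg.indicator (hm s hs)) ?_
    filter_upwards [hfg] with ω hω
    by_cases h : ω ∈ s <;> simp [h, hω]
  rw [condExp_of_stronglyMeasurable hm (hf_meas.indicator hs) (hf.indicator (hm s hs))] at hle
  filter_upwards [hle, condExp_indicator hg hs] with ω hω h_ind hmem
  simpa [hmem, h_ind] using hω

end ConditionalExpectation

theorem integrable_finset_sup' {ι : Type*} {s : Finset ι} (hs : s.Nonempty) {f : ι → Ω → ℝ}
    (hf : ∀ i ∈ s, Integrable (f i) μ) : Integrable (fun ω => s.sup' hs (fun i => f i ω)) μ := by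
  simp_rw [← Finset.sup'_apply]
  exact Finset.sup'_induction (p := fun g => Integrable g μ) hs f (fun _ ha _ hb => ha.sup hb) hf

section StoppingTime

variable {ℱ : Filtration ℕ mΩ}

theorem isStoppingTime_of_first_mem {J : ℕ} {P : ℕ → Set Ω}
    (hP : ∀ i < J, MeasurableSet[ℱ i] (P i)) {τ : Ω → ℕ} (hτJ : ∀ ω, τ ω ≤ J)
    (hτP : ∀ ω, τ ω < J → ω ∈ P (τ ω)) (hτ_min : ∀ ω, ∀ i < τ ω, ω ∉ P i) :
    IsStoppingTime ℱ (fun ω => (τ ω : WithTop ℕ)) := by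
  intro i
  simp only [Nat.cast_withTop, WithTop.coe_le_coe]
  rcases le_or_gt J i with hJi | hiJ
  · simp [fun ω => (hτJ ω).trans hJi]
  · have : {ω | τ ω ≤ i} = ⋃ k ≤ i, P k := by
      ext ω
      simp only [Set.mem_ofPred_eq, Set.mem_iUnion, exists_prop]
      refine ⟨fun h => ⟨τ ω, h, hτP ω (by omega)⟩, fun ⟨k, hki, hk⟩ => ?_⟩
      by_contra! h
      exact hτ_min ω k (by omega) hk
    rw [this]
    exact MeasurableSet.biUnion (Set.to_countable _) fun k hki =>
      ℱ.mono hki _ (hP k (lt_of_le_of_lt hki hiJ))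

variable [IsFiniteMeasure μ] {S : ℕ → Ω → ℝ}

theorem MeasureTheory.Martingale.condExp_stoppedValue_ae_eq (hS : Martingale S ℱ μ)
    {T : Ω → WithTop ℕ} (hT : IsStoppingTime ℱ T) {i n : ℕ} (hiT : ∀ ω, i ≤ T ω)
    (hTn : ∀ ω, T ω ≤ n) :
    μ[stoppedValue S T | ℱ i] =ᵐ[μ] S i := by
  have h := hS.stoppedValue_ae_eq_condExp_of_le hT (isStoppingTime_const ℱ i) hiT hTn
  rw [IsStoppingTime.measurableSpace_const] at h
  exact h.symm

-- On `{j ≤ τ}` the value `S τ` agrees with `S (τ ∨ j)`, whose conditional expectation is `S j`.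
theorem MeasureTheory.Martingale.ae_le_of_ae_le_stoppedValue_on_le (hS : Martingale S ℱ μ)
    {τ : Ω → ℕ} (hτ : IsStoppingTime ℱ (fun ω => (τ ω : WithTop ℕ))) {n : ℕ}
    (hτn : ∀ ω, τ ω ≤ n) {j : ℕ} (hjn : j ≤ n) {g : Ω → ℝ} (hg_meas : StronglyMeasurable[ℱ j] g)
    (hg : Integrable g μ) (hgS : ∀ᵐ ω ∂μ, j ≤ τ ω → g ω ≤ S (τ ω) ω) :
    ∀ᵐ ω ∂μ, j ≤ τ ω → g ω ≤ S j ω := by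
  have hs : MeasurableSet[ℱ j] {ω | j ≤ τ ω} := by
    simpa only [Nat.cast_withTop, WithTop.coe_le_coe] using hτ.measurableSet_ge_of_countable j
  set T : Ω → WithTop ℕ := fun ω => max (τ ω : WithTop ℕ) j
  have hT : IsStoppingTime ℱ T := hτ.max_const j
  have hTn : ∀ ω, T ω ≤ n := fun ω =>
    max_le (WithTop.coe_le_coe.mpr (hτn ω)) (WithTop.coe_le_coe.mpr hjn)
  have hle := ae_le_condExp_of_ae_le_on (ℱ.le j) hs hg_meas hg
    (integrable_stoppedValue ℕ hT hS.integrable hTn) (g := stoppedValue S T) <| by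
      filter_upwards [hgS] with ω hω hjτ
      have hTω : T ω = τ ω := max_eq_left (WithTop.coe_le_coe.mpr hjτ)
      have hSω : stoppedValue S T ω = S (τ ω) ω := by simp only [stoppedValue, hTω]; rfl
      exact hSω ▸ hω hjτ
  filter_upwards [hle, hS.condExp_stoppedValue_ae_eq hT (fun ω => le_max_right _ _) hTn]
    with ω hω hSω hjτ
  exact hSω ▸ hω hjτ

theorem MeasureTheory.Martingale.ae_le_of_ae_le_stoppedValue (hS : Martingale S ℱ μ)
    {f : ℕ → Ω → ℝ} {n : ℕ} (hf_meas : ∀ r < n, StronglyMeasurable[ℱ r] (f r))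
    (hf : ∀ r < n, Integrable (f r) μ) {τ : Ω → ℕ}
    (hτ : IsStoppingTime ℱ (fun ω => (τ ω : WithTop ℕ))) (hτn : ∀ ω, τ ω ≤ n)
    (hfS : ∀ᵐ ω ∂μ, ∀ r < τ ω, f r ω ≤ S (τ ω) ω) :
    ∀ᵐ ω ∂μ, ∀ j ≤ n, j ≤ τ ω → ∀ r < j, f r ω ≤ S j ω := by
  have key : ∀ j r, ∀ᵐ ω ∂μ, j ≤ n → r < j → j ≤ τ ω → f r ω ≤ S j ω := by
    intro j r
    simp only [Filter.eventually_imp_distrib_left]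
    intro hjn hrj
    refine hS.ae_le_of_ae_le_stoppedValue_on_le hτ hτn hjn
      ((hf_meas r (by omega)).mono (ℱ.mono hrj.le)) (hf r (by omega)) ?_
    filter_upwards [hfS] with ω hω hjτ
    exact hω r (lt_of_lt_of_le hrj hjτ)
  filter_upwards [ae_all_iff.2 fun j => ae_all_iff.2 (key j)] with ω hω j hjn hjτ r hrj
  exact hω j r hjn hrj hjτ

end StoppingTime

theorem doob_decomposition {Y Mstar Astar P : ℕ → Ω → ℝ}
    (hMstar : ∀ j ω, Mstar j ω = ∑ l ∈ range j, (Y (l + 1) ω - P l ω))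
    (hAstar : ∀ j ω, Astar j ω = ∑ l ∈ range j, (Y l ω - P l ω)) (j : ℕ) (ω : Ω) :
    Y j ω = Y 0 ω + Mstar j ω - Astar j ω := by
  rw [hMstar, hAstar, add_sub_assoc, ← sum_sub_distrib]
  simp only [sub_sub_sub_cancel_right]
  rw [sum_range_sub (Y · ω)]
  abel

theorem sup'_Icc_sub_eq_add_sup'_Icc {J : ℕ} {Z Y Mstar Astar P S M : ℕ → Ω → ℝ}
    (hMstar : ∀ j ω, Mstar j ω = ∑ l ∈ range j, (Y (l + 1) ω - P l ω))
    (hAstar : ∀ j ω, Astar j ω = ∑ l ∈ range j, (Y l ω - P l ω))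
    (hM : ∀ j ω, M j ω = Mstar j ω - S j ω) :
    (fun ω => (Icc 0 J).sup' (nonempty_Icc.mpr J.zero_le) (fun r => Z r ω - M r ω)) =
      Y 0 + fun ω => (Icc 0 J).sup' (nonempty_Icc.mpr J.zero_le)
        (fun r => Z r ω - Y r ω - Astar r ω + S r ω) := by
  ext ω
  rw [Pi.add_apply, add_sup']
  congr 1
  ext r
  rw [hM, doob_decomposition hMstar hAstar r ω]
  ring

section SnellEnvelope

variable {ℱ : Filtration ℕ mΩ} {J : ℕ} {Z Y : ℕ → Ω → ℝ}

theorem snellEnvelope_stronglyMeasurable_integrable (hZ_adapted : Adapted ℱ Z)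
    (hZ_int : ∀ j, Integrable (Z j) μ) (hYJ : ∀ ω, Y J ω = Z J ω)
    (hY : ∀ j, j < J → ∀ ω, Y j ω = max (Z j ω) ((μ[Y (j + 1) | ℱ j]) ω)) {j : ℕ} (hj : j ≤ J) :
    StronglyMeasurable[ℱ j] (Y j) ∧ Integrable (Y j) μ := by
  rcases hj.lt_or_eq with hj | rfl
  · rw [show Y j = Z j ⊔ μ[Y (j + 1) | ℱ j] from funext (hY j hj)]
    exact ⟨((hZ_adapted j).sup stronglyMeasurable_condExp.measurable).stronglyMeasurable,
      (hZ_int j).sup integrable_condExp⟩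
  · rw [funext hYJ]
    exact ⟨(hZ_adapted j).stronglyMeasurable, hZ_int j⟩

theorem integrable_sum_sub_condExp (hY_int : ∀ j ≤ J, Integrable (Y j) μ) {r : ℕ} (hrJ : r ≤ J) :
    Integrable (fun ω => ∑ l ∈ range r, (Y l ω - (μ[Y (l + 1) | ℱ l]) ω)) μ :=
  integrable_finsetSum _ fun l hl =>
    (hY_int l ((mem_range.mp hl).le.trans hrJ)).sub integrable_condExp

variable {C : ℕ → Ω → ℝ} {τ : Ω → ℕ}

theorem snellEnvelope_eq_at_firstOptimal (hYJ : ∀ ω, Y J ω = Z J ω)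
    (hY : ∀ j, j < J → ∀ ω, Y j ω = max (Z j ω) ((μ[Y (j + 1) | ℱ j]) ω))
    (hC : ∀ i, i < J → C i = μ[Y (i + 1) | ℱ i])
    (hτ : ∀ ω, τ ω ≤ J ∧ C (τ ω) ω ≤ Z (τ ω) ω ∧ ∀ i, i < τ ω → Z i ω < C i ω) (ω : Ω) :
    Y (τ ω) ω = Z (τ ω) ω := by
  rcases (hτ ω).1.lt_or_eq with hτJ | hτJ
  · rw [hY _ hτJ, ← hC _ hτJ, max_eq_left (hτ ω).2.1]
  · exact hτJ ▸ hYJ ω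

theorem sum_snellEnvelope_sub_condExp_eq_zero_of_le_firstOptimal
    (hY : ∀ j, j < J → ∀ ω, Y j ω = max (Z j ω) ((μ[Y (j + 1) | ℱ j]) ω))
    (hC : ∀ i, i < J → C i = μ[Y (i + 1) | ℱ i])
    (hτ : ∀ ω, τ ω ≤ J ∧ C (τ ω) ω ≤ Z (τ ω) ω ∧ ∀ i, i < τ ω → Z i ω < C i ω) {ω : Ω} {r : ℕ}
    (hr : r ≤ τ ω) :
    ∑ l ∈ range r, (Y l ω - (μ[Y (l + 1) | ℱ l]) ω) = 0 := by
  refine sum_eq_zero fun l hl => ?_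
  have hlτ : l < τ ω := lt_of_lt_of_le (mem_range.mp hl) hr
  have hlJ : l < J := lt_of_lt_of_le hlτ (hτ ω).1
  rw [hY l hlJ, ← hC l hlJ, max_eq_right ((hτ ω).2.2 l hlτ).le, sub_self]

end SnellEnvelope

section Pathwise

variable {J t : ℕ} {z y a s : ℕ → ℝ}

theorem le_sup'_Icc_sub_sub_add (ht : t ≤ J) (hyt : y t = z t) (hat : a t = 0) :
    s t ≤ (Icc 0 J).sup' (nonempty_Icc.mpr J.zero_le) (fun r => z r - y r - a r + s r) :=
  le_sup'_of_le _ (mem_Icc.mpr ⟨t.zero_le, ht⟩) (by rw [hyt, hat]; linarith)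

theorem sup'_Icc_sub_sub_add_le_iff (ht : t ≤ J) (hyt : y t = z t) (ha : ∀ r ≤ t, a r = 0) :
    (Icc 0 J).sup' (nonempty_Icc.mpr J.zero_le) (fun r => z r - y r - a r + s r) ≤ s t ↔
      (∀ r < t, z r - y r + s r ≤ s t) ∧ (∀ j ≤ J, t < j → s j - s t ≤ y j - z j + a j) := by
  rw [sup'_le_iff]
  constructor
  · intro h
    refine ⟨fun r hrt => ?_, fun j hjJ htj => ?_⟩
    · have := h r (mem_Icc.mpr ⟨r.zero_le, by omega⟩)
      rw [ha r hrt.le] at this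
      linarith
    · linarith [h j (mem_Icc.mpr ⟨j.zero_le, hjJ⟩)]
  · rintro ⟨hlt, hgt⟩ r hr
    rcases lt_trichotomy r t with hrt | rfl | htr
    · rw [ha r hrt.le]
      linarith [hlt r hrt]
    · rw [hyt, ha r le_rfl]
      linarith
    · linarith [hgt r (mem_Icc.mp hr).2 htr]

end Pathwise

theorem ae_sup'_eq_stoppedValue_iff [IsFiniteMeasure μ] {ℱ : Filtration ℕ mΩ} {J : ℕ}
    {Z Y A S : ℕ → Ω → ℝ} (hZ : Adapted ℱ Z) (hZ_int : ∀ j, Integrable (Z j) μ)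
    (hY : ∀ j ≤ J, StronglyMeasurable[ℱ j] (Y j) ∧ Integrable (Y j) μ) (hS : Martingale S ℱ μ)
    {τ : Ω → ℕ} (hτ : IsStoppingTime ℱ (fun ω => (τ ω : WithTop ℕ))) (hτJ : ∀ ω, τ ω ≤ J)
    (hYτ : ∀ ω, Y (τ ω) ω = Z (τ ω) ω) (hA : ∀ ω, ∀ r ≤ τ ω, A r ω = 0) :
    (fun ω => (Icc 0 J).sup' (nonempty_Icc.mpr J.zero_le)
        (fun r => Z r ω - Y r ω - A r ω + S r ω))
      =ᵐ[μ] stoppedValue S (fun ω => (τ ω : WithTop ℕ)) ↔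
    ∀ᵐ ω ∂μ, (∀ j, j ≤ J → j ≤ τ ω → ∀ r, r < j → Z r ω - Y r ω - S j ω + S r ω ≤ 0)
      ∧ (∀ j, j ≤ J → τ ω < j → S j ω - S (τ ω) ω ≤ Y j ω - Z j ω + A j ω) := by
  have hiff : ∀ ω, (Icc 0 J).sup' (nonempty_Icc.mpr J.zero_le)
      (fun r => Z r ω - Y r ω - A r ω + S r ω) = S (τ ω) ω ↔
      (∀ r < τ ω, Z r ω - Y r ω + S r ω ≤ S (τ ω) ω)
        ∧ (∀ j ≤ J, τ ω < j → S j ω - S (τ ω) ω ≤ Y j ω - Z j ω + A j ω) := fun ω => by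
    rw [← sup'_Icc_sub_sub_add_le_iff (hτJ ω) (hYτ ω) (hA ω)]
    exact ⟨Eq.le, fun h => h.antisymm <|
      le_sup'_Icc_sub_sub_add (s := (S · ω)) (hτJ ω) (hYτ ω) (hA ω _ le_rfl)⟩
  constructor
  · intro h
    have hdd := h.mono fun ω hω => (hiff ω).mp hω
    have hdd1 := hS.ae_le_of_ae_le_stoppedValue (f := fun r ω => Z r ω - Y r ω + S r ω)
      (fun r hr => ((hZ r).stronglyMeasurable.sub (hY r hr.le).1).add (hS.stronglyAdapted r))
      (fun r hr => ((hZ_int r).sub (hY r hr.le).2).add (hS.integrable r))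
      hτ hτJ (hdd.mono fun ω h => h.1)
    filter_upwards [hdd, hdd1] with ω hω hω₁
    exact ⟨fun j hj hjτ r hr => by linarith [hω₁ j hj hjτ r hr], hω.2⟩
  · intro h
    filter_upwards [h] with ω ⟨hdd1, hdd2⟩
    exact (hiff ω).mpr ⟨fun r hr => by linarith [hdd1 (τ ω) (hτJ ω) le_rfl r hr], hdd2⟩

end

theorem mem_weakly_optimal_at_zero_iff_general
    {Ω : Type*} {mΩ : MeasurableSpace Ω} {μ : Measure Ω} [IsProbabilityMeasure μ]
    (J : ℕ) (ℱ : Filtration ℕ mΩ)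
    (Z Y Mstar Astar : ℕ → Ω → ℝ)
    (hZ_adapted : Adapted ℱ Z)
    (hZ_int : ∀ j, Integrable (Z j) μ)
    (hYJ : ∀ ω, Y J ω = Z J ω)
    (hY : ∀ j, j < J → ∀ ω, Y j ω = max (Z j ω) ((μ[Y (j + 1) | ℱ j]) ω))
    (hMstar : ∀ j ω, Mstar j ω =
      ∑ l ∈ Finset.range j, (Y (l + 1) ω - (μ[Y (l + 1) | ℱ l]) ω))
    (hAstar : ∀ j ω, Astar j ω =
      ∑ l ∈ Finset.range j, (Y l ω - (μ[Y (l + 1) | ℱ l]) ω))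
    -- the continuation value `C i = E[Y (i+1) | ℱ i]`, with the convention `Y (J+1) := 0`
    (C : ℕ → Ω → ℝ)
    (hC : ∀ i, i < J → C i = μ[Y (i + 1) | ℱ i])
    -- the first optimal stopping time `τ⋆ = inf{ i ≥ 0 : Z i ≥ E[Y (i+1) | ℱ i] }`
    (τs : Ω → ℕ)
    (hτs : ∀ ω, τs ω ≤ J ∧ C (τs ω) ω ≤ Z (τs ω) ω ∧ ∀ i, i < τs ω → Z i ω < C i ω)
    -- the martingale shift `S` and the shifted Doob martingale `M = M⋆ − S`
    (S M : ℕ → Ω → ℝ)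
    (hS : Martingale S ℱ μ)
    (hS0 : ∀ ω, S 0 ω = 0)
    (hMdef : ∀ j ω, M j ω = Mstar j ω - S j ω) :
    (Y 0 =ᵐ[μ] μ[fun ω => (Finset.Icc 0 J).sup' (Finset.nonempty_Icc.mpr (Nat.zero_le J))
        (fun r => Z r ω - M r ω) | ℱ 0])
    ↔
    (∀ᵐ ω ∂μ,
      (∀ j, j ≤ J → j ≤ τs ω → ∀ r, r < j → Z r ω - Y r ω - S j ω + S r ω ≤ 0)
      ∧ (∀ j, j ≤ J → τs ω < j → S j ω - S (τs ω) ω ≤ Y j ω - Z j ω + Astar j ω)) := by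
  have hτJ : ∀ ω, τs ω ≤ J := fun ω => (hτs ω).1
  have hτJ' : ∀ ω, (τs ω : WithTop ℕ) ≤ J := fun ω => WithTop.coe_le_coe.mpr (hτJ ω)
  have hYτ := snellEnvelope_eq_at_firstOptimal hYJ hY hC hτs
  have hAτ : ∀ ω, ∀ r ≤ τs ω, Astar r ω = 0 := fun ω r hr =>
    (hAstar r ω).trans (sum_snellEnvelope_sub_condExp_eq_zero_of_le_firstOptimal hY hC hτs hr)
  have hYm := fun j (hj : j ≤ J) =>
    snellEnvelope_stronglyMeasurable_integrable hZ_adapted hZ_int hYJ hY hj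
  have hτ : IsStoppingTime ℱ (fun ω => (τs ω : WithTop ℕ)) :=
    isStoppingTime_of_first_mem (P := fun i => {ω | C i ω ≤ Z i ω})
      (fun i hi => hC i hi ▸ measurableSet_le stronglyMeasurable_condExp.measurable (hZ_adapted i))
      hτJ (fun ω _ => (hτs ω).2.1) fun ω i hi => not_le.mpr ((hτs ω).2.2 i hi)
  have hG_int := integrable_finset_sup' (μ := μ) (nonempty_Icc.mpr J.zero_le)
    (f := fun r ω => Z r ω - Y r ω - Astar r ω + S r ω) fun r hr => by
      have hrJ := (mem_Icc.mp hr).2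
      have hA_int := funext (hAstar r) ▸ integrable_sum_sub_condExp (fun j hj => (hYm j hj).2) hrJ
      exact (((hZ_int r).sub (hYm r hrJ).2).sub hA_int).add (hS.integrable r)
  have hSτ_zero : μ[stoppedValue S (fun ω => (τs ω : WithTop ℕ)) | ℱ 0] =ᵐ[μ] 0 := by
    filter_upwards [hS.condExp_stoppedValue_ae_eq hτ (fun ω => bot_le) hτJ'] with ω hω
    rw [hω, hS0, Pi.zero_apply]
  rw [sup'_Icc_sub_eq_add_sup'_Icc hMstar hAstar hMdef,
    ae_eq_condExp_add_iff (ℱ.le 0) (hYm 0 J.zero_le).1 (hYm 0 J.zero_le).2 hG_int,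
    condExp_ae_eq_zero_iff_ae_eq (ℱ.le 0) hG_int (integrable_stoppedValue ℕ hτ hS.integrable hτJ')
      (ae_of_all _ fun ω => le_sup'_Icc_sub_sub_add (s := (S · ω)) (hτJ ω) (hYτ ω) (hAτ ω _ le_rfl))
      hSτ_zero]
  exact ae_sup'_eq_stoppedValue_iff hZ_adapted hZ_int hYm hS hτ hτJ hYτ hAτ

/-- **Theorem 2, part (i): characterization of `M^{∘,0}`.** Let `S` be a martingale with
`S 0 = 0`, let `τ⋆` be the first optimal stopping time, and set `M := M⋆ − S`. Then `M` is
weakly optimal at `0` if and only if, almost surely: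
(dd1) `max_{0 ≤ r < j} (Z r − Y r − S j + S r) ≤ 0` on the event `{j ≤ τ⋆}` for every
`0 ≤ j ≤ J`, and
(dd2) `S j − S τ⋆ ≤ Y j − Z j + A⋆ j` on the event `{τ⋆ < j}` for every `0 ≤ j ≤ J`. -/
theorem mem_weakly_optimal_at_zero_iff
    {Ω : Type*} {mΩ : MeasurableSpace Ω} {μ : Measure Ω} [IsProbabilityMeasure μ]
    (J : ℕ) (ℱ : Filtration ℕ mΩ)
    (Z Y Mstar Astar : ℕ → Ω → ℝ)
    (hZ_adapted : Adapted ℱ Z)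
    (hZ_int : ∀ j, Integrable (Z j) μ)
    (hYJ : ∀ ω, Y J ω = Z J ω)
    (hY : ∀ j, j < J → ∀ ω, Y j ω = max (Z j ω) ((μ[Y (j + 1) | ℱ j]) ω))
    (hMstar : ∀ j ω, Mstar j ω =
      ∑ l ∈ Finset.range j, (Y (l + 1) ω - (μ[Y (l + 1) | ℱ l]) ω))
    (hAstar : ∀ j ω, Astar j ω =
      ∑ l ∈ Finset.range j, (Y l ω - (μ[Y (l + 1) | ℱ l]) ω))
    -- the continuation value `C i = E[Y (i+1) | ℱ i]`, with the convention `Y (J+1) := 0`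
    (C : ℕ → Ω → ℝ)
    (hC : ∀ i, i < J → C i = μ[Y (i + 1) | ℱ i])
    (hCJ : ∀ ω, C J ω = 0)
    -- the first optimal stopping time `τ⋆ = inf{ i ≥ 0 : Z i ≥ E[Y (i+1) | ℱ i] }`
    (τs : Ω → ℕ)
    (hτs : ∀ ω, τs ω ≤ J ∧ C (τs ω) ω ≤ Z (τs ω) ω ∧ ∀ i, i < τs ω → Z i ω < C i ω)
    -- the martingale shift `S` and the shifted Doob martingale `M = M⋆ − S`
    (S M : ℕ → Ω → ℝ)
    (hS : Martingale S ℱ μ)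
    (hS0 : ∀ ω, S 0 ω = 0)
    (hMdef : ∀ j ω, M j ω = Mstar j ω - S j ω) :
    (Y 0 =ᵐ[μ] μ[fun ω => (Finset.Icc 0 J).sup' (Finset.nonempty_Icc.mpr (Nat.zero_le J))
        (fun r => Z r ω - M r ω) | ℱ 0])
    ↔
    (∀ᵐ ω ∂μ,
      (∀ j, j ≤ J → j ≤ τs ω → ∀ r, r < j → Z r ω - Y r ω - S j ω + S r ω ≤ 0)
      ∧ (∀ j, j ≤ J → τs ω < j → S j ω - S (τs ω) ω ≤ Y j ω - Z j ω + Astar j ω)) :=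
  mem_weakly_optimal_at_zero_iff_general J ℱ Z Y Mstar Astar hZ_adapted hZ_int hYJ hY hMstar hAstar
    C hC τs hτs S M hS hS0 hMdef
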